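/- arXiv:2503.07001 — 4 statements merged into one kernel-verified Lean document; each statement's English description precedes it below -/
import Mathlib

section
/- Let ε₁, …, εₙ be i.i.d. Rademacher random variables, let a₁, …, aₙ, b₁, …, bₙ be real numbers with ∑_{i=1}^n aᵢ² = ∑_{i=1}^n bᵢ² = 1 such that the vector (a₁², …, aₙ²) is majorized by (b₁², …, bₙ²) in the Schur order, and let Φ : ℝ → ℝ be an even, twice continuously differentiable function whose second derivative Φ'' is convex. Then E Φ(∑_{i=1}^n bᵢεᵢ) ≤ E Φ(∑_{i=1}^n aᵢεᵢ). -/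
open MeasureTheory ProbabilityTheory Real

/-- The law of a Rademacher random variable: `±1` with probability `1/2` each. -/
noncomputable def rademacherLaw : Measure ℝ :=
  ((1 : ENNReal) / 2) • Measure.dirac 1 + ((1 : ENNReal) / 2) • Measure.dirac (-1)

/-- `x` is majorized by `y` in the Schur order: for every `k`, the sum of the `k` largest
coordinates of `x` is at most the sum of the `k` largest coordinates of `y`.  This is
expressed equivalently as: every partial sum of `x` over a set `A` is dominated by some
partial sum of `y` over a set of the same cardinality. -/
def IsMajorizedBy {n : ℕ} (x y : Fin n → ℝ) : Prop :=
  ∀ A : Finset (Fin n), ∃ B : Finset (Fin n),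
    B.card = A.card ∧ ∑ i ∈ A, x i ≤ ∑ i ∈ B, y i

/-!
Averaging over the signs, `𝔼 Φ(∑ aᵢ εᵢ)` is a function `F(a₁², …, aₙ²)` of the squares alone,
invariant under permutations. By Hardy–Littlewood–Pólya, `x ≺ y` is reached from `y` by finitely
many transfers moving mass from a larger coordinate to a smaller one without reversing their
order, so it suffices that such a transfer does not decrease `F`. Freezing all signs but two,
this is a four-point inequality for `g(t) = Φ(c + √t) + Φ(c - √t)`, which is convex on `[0, ∞)`:
at `t = r²` its derivative is `(Φ'(c + r) - Φ'(c - r)) / 2r`, increasing in `r` because the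
convexity of `Φ''` makes `r ↦ Φ'(c + r) - Φ'(c - r)` convex on `[0, ∞)`, and it vanishes at `0`.
-/

open Finset

section ConvexAnalysis

open Set

lemma ConvexOn.add_le_add_of_mem_Icc {s : Set ℝ} {g : ℝ → ℝ} (hg : ConvexOn ℝ s g)
    {p q p' q' : ℝ} (hp' : p' ∈ s) (hq' : q' ∈ s) (hp : p ∈ Icc q' p') (hq : q ∈ Icc q' p')
    (hsum : p + q = p' + q') : g p + g q ≤ g p' + g q' := by
  rcases hp.1.trans hp.2 |>.eq_or_lt with h | h
  · obtain rfl : p = p' := by linarith [hp.1, hp.2]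
    obtain rfl : q = q' := by linarith
    rfl
  -- `p` and `q` are the two convex combinations of `p'` and `q'` with swapped weights
  set t := (p - q') / (p' - q') with ht
  have ht₀ : 0 ≤ t := div_nonneg (by linarith [hp.1]) (by linarith)
  have ht₁ : t ≤ 1 := (div_le_one (by linarith)).2 (by linarith [hp.2])
  have hpt : t * p' + (1 - t) * q' = p := by rw [ht]; field_simp; ring
  have hqt : (1 - t) * p' + t * q' = q := by linear_combination -hsum - hpt
  have h₁ := hg.2 hp' hq' ht₀ (sub_nonneg.2 ht₁) (add_sub_cancel t 1)
  have h₂ := hg.2 hp' hq' (sub_nonneg.2 ht₁) ht₀ (sub_add_cancel 1 t)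
  simp only [smul_eq_mul, hpt, hqt] at h₁ h₂
  linarith

lemma ConvexOn.monotoneOn_add_reflect {f : ℝ → ℝ} (hf : ConvexOn ℝ univ f) (c : ℝ) :
    MonotoneOn (fun r => f (c + r) + f (c - r)) (Ici 0) := by
  intro r₁ (h₁ : 0 ≤ r₁) r₂ _ h₁₂
  exact hf.add_le_add_of_mem_Icc trivial trivial ⟨by linarith, by linarith⟩
    ⟨by linarith, by linarith⟩ (by ring)

lemma convexOn_sub_reflect {f f' : ℝ → ℝ} (hf : ∀ x, HasDerivAt f (f' x) x)
    (hf' : ConvexOn ℝ univ f') (c : ℝ) :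
    ConvexOn ℝ (Ici 0) (fun r => f (c + r) - f (c - r)) := by
  have hderiv : ∀ r, HasDerivAt (fun r => f (c + r) - f (c - r)) (f' (c + r) + f' (c - r)) r := by
    intro r
    have hadd := (hf (c + r)).comp r ((hasDerivAt_id r).const_add c)
    have hsub := (hf (c - r)).comp r ((hasDerivAt_id r).const_sub c)
    exact (hadd.sub hsub).congr_deriv (by ring)
  refine MonotoneOn.convexOn_of_deriv (convex_Ici 0)
    (continuous_iff_continuousAt.2 fun r => (hderiv r).continuousAt).continuousOn
    (fun r _ => (hderiv r).differentiableAt.differentiableWithinAt) ?_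
  rw [interior_Ici, funext fun r => (hderiv r).deriv]
  exact (hf'.monotoneOn_add_reflect c).mono Ioi_subset_Ici_self

lemma convexOn_add_reflect_sqrt {f f' f'' : ℝ → ℝ} (hf : ∀ x, HasDerivAt f (f' x) x)
    (hf' : ∀ x, HasDerivAt f' (f'' x) x) (hf'' : ConvexOn ℝ univ f'') (c : ℝ) :
    ConvexOn ℝ (Ici 0) (fun t => f (c + √t) + f (c - √t)) := by
  have hderiv : ∀ t, 0 < t → HasDerivAt (fun t => f (c + √t) + f (c - √t))
      ((f' (c + √t) - f' (c - √t)) / √t / 2) t := by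
    intro t ht
    have hs := Real.hasDerivAt_sqrt ht.ne'
    have hadd := (hf (c + √t)).comp t (hs.const_add c)
    have hsub := (hf (c - √t)).comp t (hs.const_sub c)
    exact (hadd.add hsub).congr_deriv (by field_simp; ring)
  have hslope : MonotoneOn (fun r => (f' (c + r) - f' (c - r)) / r) (Ioi 0) := by
    intro r₁ (h₁ : 0 < r₁) r₂ (h₂ : 0 < r₂) h
    simpa [slope_def_field] using (convexOn_sub_reflect hf' hf'' c).slope_mono self_mem_Ici
      ⟨h₁.le, h₁.ne'⟩ ⟨h₂.le, h₂.ne'⟩ h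
  have hfc : Continuous f := continuous_iff_continuousAt.2 fun x => (hf x).continuousAt
  refine MonotoneOn.convexOn_of_deriv (convex_Ici 0) (by fun_prop) ?_ ?_ <;> rw [interior_Ici]
  · exact fun t ht => (hderiv t ht).differentiableAt.differentiableWithinAt
  · intro t₁ h₁ t₂ h₂ h
    rw [(hderiv t₁ h₁).deriv, (hderiv t₂ h₂).deriv]
    exact div_le_div_of_nonneg_right
      (hslope (Real.sqrt_pos.2 h₁) (Real.sqrt_pos.2 h₂) (Real.sqrt_le_sqrt h)) zero_le_two

def fourPoint (Φ : ℝ → ℝ) (c u v : ℝ) : ℝ := ∑ e₁ : ℤˣ, ∑ e₂ : ℤˣ, Φ (c + u * e₁ + v * e₂)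

lemma fourPoint_mul_units (Φ : ℝ → ℝ) (c u v : ℝ) (e₁ e₂ : ℤˣ) :
    fourPoint Φ c (u * e₁) (v * e₂) = fourPoint Φ c u v :=
  Fintype.sum_equiv (Equiv.mulLeft e₁) _ _ fun d₁ =>
    Fintype.sum_equiv (Equiv.mulLeft e₂) _ _ fun d₂ => by simp [mul_assoc]

lemma fourPoint_eq (Φ : ℝ → ℝ) (c u v : ℝ) :
    fourPoint Φ c u v =
      Φ (c + (u + v)) + Φ (c - (u + v)) + (Φ (c + (u - v)) + Φ (c - (u - v))) := by
  simp only [fourPoint, UnitsInt.univ, sum_pair (units_ne_neg_self (1 : ℤˣ))]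
  push_cast
  ring_nf

lemma add_reflect_eq_sqrt_sq (f : ℝ → ℝ) (c w : ℝ) :
    f (c + w) + f (c - w) = f (c + √(w ^ 2)) + f (c - √(w ^ 2)) := by
  rw [Real.sqrt_sq_eq_abs]
  rcases abs_cases w with ⟨h, _⟩ | ⟨h, _⟩ <;> rw [h]
  rw [sub_neg_eq_add, ← sub_eq_add_neg, add_comm]

theorem fourPoint_sqrt_le {Φ : ℝ → ℝ} (hC2 : ContDiff ℝ 2 Φ)
    (hconv : ConvexOn ℝ univ (deriv (deriv Φ))) (c : ℝ) {X Y δ : ℝ} (hY : 0 ≤ Y) (hδ : 0 ≤ δ)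
    (hXY : Y + δ ≤ X - δ) :
    fourPoint Φ c √X √Y ≤ fourPoint Φ c √(X - δ) √(Y + δ) := by
  have hg := convexOn_add_reflect_sqrt (fun x => (hC2.differentiable two_ne_zero x).hasDerivAt)
    (fun x => (hC2.differentiable_deriv_two x).hasDerivAt) hconv c
  have hu := Real.sq_sqrt (by linarith : 0 ≤ X)
  have hv := Real.sq_sqrt hY
  have hu' := Real.sq_sqrt (by linarith : 0 ≤ X - δ)
  have hv' := Real.sq_sqrt (by linarith : 0 ≤ Y + δ)
  -- with `u, v = √X, √Y` and `g` the convex function of `hg`, `fourPoint Φ c u v` is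
  -- `g ((u + v) ^ 2) + g ((u - v) ^ 2)`; the pinch keeps `u ^ 2 + v ^ 2` and increases `u * v`,
  -- spreading these two points apart with the same sum
  have huv : √X * √Y ≤ √(X - δ) * √(Y + δ) := by
    rw [← Real.sqrt_mul (by linarith), ← Real.sqrt_mul (by linarith)]
    exact Real.sqrt_le_sqrt (by nlinarith)
  have huv₀ : 0 ≤ √X * √Y := by positivity
  rw [fourPoint_eq, fourPoint_eq, add_reflect_eq_sqrt_sq Φ c (√X + √Y),
    add_reflect_eq_sqrt_sq Φ c (√X - √Y), add_reflect_eq_sqrt_sq Φ c (√(X - δ) + √(Y + δ)),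
    add_reflect_eq_sqrt_sq Φ c (√(X - δ) - √(Y + δ))]
  refine hg.add_le_add_of_mem_Icc (mem_Ici.2 (sq_nonneg _)) (mem_Ici.2 (sq_nonneg _))
    ⟨?_, ?_⟩ ⟨?_, ?_⟩ ?_ <;> nlinarith

end ConvexAnalysis

section Transfer

variable {ι : Type*}

def transfer [DecidableEq ι] (y : ι → ℝ) (j k : ι) (δ : ℝ) : ι → ℝ :=
  y - Pi.single j δ + Pi.single k δ

lemma sum_transfer [DecidableEq ι] (y : ι → ℝ) (j k : ι) (δ : ℝ) (s : Finset ι) :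
    ∑ i ∈ s, transfer y j k δ i =
      ∑ i ∈ s, y i - (if j ∈ s then δ else 0) + (if k ∈ s then δ else 0) := by
  simp [transfer, sum_add_distrib, sum_sub_distrib, sum_pi_single']

lemma card_filter_transfer_lt [DecidableEq ι] [Fintype ι] {x y : ι → ℝ} {j k : ι} {δ : ℝ}
    (hjk : j ≠ k) (hj : y j ≠ x j) (hk : y k ≠ x k) (hδ : δ = y j - x j ∨ δ = x k - y k) :
    #{i | transfer y j k δ i ≠ x i} < #{i | y i ≠ x i} := by
  refine card_lt_card ((ssubset_iff_of_subset fun i => ?_).2 ?_)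
  · simp only [mem_filter, mem_univ, true_and]
    contrapose!
    intro hi
    have hij : i ≠ j := by rintro rfl; exact hj hi
    have hik : i ≠ k := by rintro rfl; exact hk hi
    simp [transfer, hij, hik, hi]
  · rcases hδ with rfl | rfl
    · exact ⟨j, by simpa using hj, by simp [transfer, Pi.single_apply, hjk]⟩
    · exact ⟨k, by simpa using hk, by simp [transfer, Pi.single_apply, hjk.symm]⟩

lemma transfer_nonneg [DecidableEq ι] {y : ι → ℝ} {j k : ι} {δ : ℝ} (hy : 0 ≤ y) (hδ : 0 ≤ δ)
    (hδj : δ ≤ y j) : 0 ≤ transfer y j k δ := by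
  intro i
  have hyi : 0 ≤ y i := hy i
  rcases eq_or_ne i j with rfl | hij
  · simp only [transfer, Pi.add_apply, Pi.sub_apply, Pi.single_eq_same, Pi.single_apply,
      Pi.zero_apply]
    split_ifs <;> linarith
  · simp only [transfer, Pi.add_apply, Pi.sub_apply, Pi.single_eq_of_ne hij,
      Pi.single_apply, Pi.zero_apply]
    split_ifs <;> linarith

variable [LinearOrder ι] [LocallyFiniteOrderBot ι]

lemma Antitone.sum_le_sum_Iic {M : Type*} [AddCommMonoid M] [PartialOrder M]
    [IsOrderedAddMonoid M] {f : ι → M} (hf : Antitone f) {s : Finset ι} {m : ι}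
    (hs : #s = #(Iic m)) : ∑ i ∈ s, f i ≤ ∑ i ∈ Iic m, f i :=
  calc ∑ i ∈ s, f i ≤ ∑ i ∈ s ∩ Iic m, f i + #(s \ Iic m) • f m := by
        rw [← sum_inter_add_sum_sdiff s (Iic m)]
        gcongr
        exact sum_le_card_nsmul _ _ _ fun i hi =>
          hf (not_le.1 (mem_Iic.not.1 (mem_sdiff.1 hi).2)).le
    _ = ∑ i ∈ Iic m ∩ s, f i + #(Iic m \ s) • f m := by rw [inter_comm, card_sdiff_comm hs]
    _ ≤ ∑ i ∈ Iic m, f i := by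
        rw [← sum_inter_add_sum_sdiff (Iic m) s]
        gcongr
        exact card_nsmul_le_sum _ _ _ fun i hi => hf (mem_Iic.1 (mem_sdiff.1 hi).1)

lemma exists_transfer_pair [Fintype ι] {x y : ι → ℝ}
    (hpre : ∀ m, ∑ i ∈ Iic m, x i ≤ ∑ i ∈ Iic m, y i) (hsum : ∑ i, y i = ∑ i, x i) (hxy : y ≠ x) :
    ∃ j k, j < k ∧ x j < y j ∧ y k < x k ∧ ∀ i < k, x i ≤ y i := by
  obtain ⟨k, hk, hmin⟩ : ∃ k, y k < x k ∧ ∀ i < k, x i ≤ y i := by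
    have hne : ({i | y i < x i} : Finset ι).Nonempty := by
      by_contra! h
      refine hxy (funext fun i => ?_)
      refine ((sum_eq_sum_iff_of_le fun i _ => ?_).1 hsum.symm i (mem_univ i)).symm
      exact not_lt.1 (filter_eq_empty_iff.1 h (mem_univ i))
    obtain ⟨k, hk, hmin⟩ := exists_min_image _ id hne
    exact ⟨k, (mem_filter.1 hk).2, fun i hi =>
      not_lt.1 fun h => (hmin i (mem_filter.2 ⟨mem_univ i, h⟩)).not_gt hi⟩
  have hlt : ∑ i ∈ Iio k, x i < ∑ i ∈ Iio k, y i := by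
    have := hpre k
    rw [← Iio_insert, sum_insert (by simp), sum_insert (by simp)] at this
    linarith
  obtain ⟨j, hj, hxj⟩ := exists_lt_of_sum_lt hlt
  exact ⟨j, k, mem_Iio.1 hj, hxj, hk, hmin⟩

lemma sum_Iic_le_sum_Iic_transfer {x y : ι → ℝ} {j k : ι} {δ : ℝ}
    (hpre : ∀ m, ∑ i ∈ Iic m, x i ≤ ∑ i ∈ Iic m, y i) (hjk : j < k)
    (hle : ∀ i < k, x i ≤ y i) (hδj : δ ≤ y j - x j) (m : ι) :
    ∑ i ∈ Iic m, x i ≤ ∑ i ∈ Iic m, transfer y j k δ i := by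
  rw [sum_transfer]
  by_cases hkm : k ≤ m
  · simp [hkm, hjk.le.trans hkm, hpre m]
  by_cases hjm : j ≤ m
  · -- every coordinate up to `m < k` has `x i ≤ y i`, and the `j`-th one has slack `δ`
    have : δ ≤ ∑ i ∈ Iic m, (y i - x i) :=
      hδj.trans (single_le_sum (fun i hi => sub_nonneg.2
        (hle i ((mem_Iic.1 hi).trans_lt (not_le.1 hkm)))) (mem_Iic.2 hjm))
    rw [sum_sub_distrib] at this
    simp only [mem_Iic, hkm, hjm, if_true, if_false]
    linarith
  · simp [hkm, hjm, hpre m]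

theorem le_of_forall_sum_Iic_le [Fintype ι] {F : (ι → ℝ) → ℝ}
    (hF : ∀ y j k δ, 0 ≤ y → j ≠ k → 0 ≤ δ → y k + δ ≤ y j - δ →
      F y ≤ F (transfer y j k δ))
    {x y : ι → ℝ} (hx : Antitone x) (hy : 0 ≤ y)
    (hpre : ∀ m, ∑ i ∈ Iic m, x i ≤ ∑ i ∈ Iic m, y i) (hsum : ∑ i, y i = ∑ i, x i) :
    F y ≤ F x := by
  induction hd : #{i | y i ≠ x i} using Nat.strong_induction_on generalizing y with
  | _ d ih =>
  by_cases hxy : y = x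
  · rw [hxy]
  obtain ⟨j, k, hjk, hj, hk, hle⟩ := exists_transfer_pair hpre hsum hxy
  -- this `δ` settles coordinate `j` or `k`, and `y k + δ ≤ x k ≤ x j ≤ y j - δ`
  set δ := min (y j - x j) (x k - y k)
  have hδj : δ ≤ y j - x j := min_le_left _ _
  have hδk : δ ≤ x k - y k := min_le_right _ _
  have hδ : 0 ≤ δ := le_min (by linarith) (by linarith)
  have hord : y k + δ ≤ y j - δ := by linarith [hx hjk.le]
  have hy' : 0 ≤ transfer y j k δ :=
    transfer_nonneg hy hδ (by linarith [show 0 ≤ y k from hy k])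
  have hsum' : ∑ i, transfer y j k δ i = ∑ i, x i := by simp [sum_transfer, hsum]
  have hcard := card_filter_transfer_lt hjk.ne hj.ne' hk.ne (min_choice _ _)
  exact (hF y j k δ hy hjk.ne hδ hord).trans (ih _ (hd ▸ hcard) hy'
    (sum_Iic_le_sum_Iic_transfer hpre hjk hle hδj) hsum' rfl)

end Transfer

section SignSum

variable {ι : Type*} [Fintype ι] [DecidableEq ι]

def signSum (Φ : ℝ → ℝ) (a : ι → ℝ) : ℝ := ∑ s : ι → ℤˣ, Φ (∑ i, a i * s i)

lemma signSum_mul_units (Φ : ℝ → ℝ) (a : ι → ℝ) (t : ι → ℤˣ) :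
    signSum Φ (fun i => a i * t i) = signSum Φ a :=
  Fintype.sum_equiv (Equiv.mulLeft t) _ _ fun s => by simp [mul_assoc]

lemma signSum_abs (Φ : ℝ → ℝ) (a : ι → ℝ) : signSum Φ (fun i => |a i|) = signSum Φ a := by
  convert signSum_mul_units Φ a fun i => if 0 ≤ a i then 1 else -1 using 3 with i
  split_ifs with h
  · simp [abs_of_nonneg h]
  · simp [abs_of_neg (not_le.1 h)]

lemma signSum_comp_perm (Φ : ℝ → ℝ) (a : ι → ℝ) (σ : Equiv.Perm ι) :
    signSum Φ (a ∘ σ) = signSum Φ a := by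
  refine Fintype.sum_equiv (σ.arrowCongr (Equiv.refl ℤˣ)) _ _ fun s => congrArg Φ ?_
  simpa using Equiv.sum_comp σ fun i => a i * ((s (σ.symm i) : ℤ) : ℝ)

lemma four_mul_signSum (Φ : ℝ → ℝ) (a : ι → ℝ) {j k : ι} (hjk : j ≠ k) :
    4 * signSum Φ a = ∑ s : ι → ℤˣ, fourPoint Φ (∑ i ∈ {j, k}ᶜ, a i * s i) (a j) (a k) := by
  have hflip : ∀ (s : ι → ℤˣ) (e₁ e₂ : ℤˣ),
      ∑ i, a i * (((s * (Pi.mulSingle j e₁ * Pi.mulSingle k e₂) : ι → ℤˣ) i : ℤ) : ℝ) =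
        ∑ i ∈ {j, k}ᶜ, a i * s i + a j * s j * e₁ + a k * s k * e₂ := by
    intro s e₁ e₂
    have hrest : ∑ i ∈ {j, k}ᶜ,
        a i * (((s * (Pi.mulSingle j e₁ * Pi.mulSingle k e₂) : ι → ℤˣ) i : ℤ) : ℝ) =
          ∑ i ∈ {j, k}ᶜ, a i * s i :=
      sum_congr rfl fun i hi => by
        obtain ⟨hij, hik⟩ : i ≠ j ∧ i ≠ k := by simpa [not_or] using hi
        simp [hij, hik]
    rw [← sum_add_sum_compl {j, k}, sum_pair hjk, hrest]
    simp only [Pi.mul_apply, Pi.mulSingle_eq_same, Pi.mulSingle_eq_of_ne hjk,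
      Pi.mulSingle_eq_of_ne hjk.symm, mul_one, one_mul, Units.val_mul, Int.cast_mul]
    ring
  -- average `signSum Φ a` over the four sign flips of the coordinates `j` and `k`
  calc 4 * signSum Φ a = ∑ e₁ : ℤˣ, ∑ e₂ : ℤˣ, signSum Φ a := by
        simp only [sum_const, card_univ, Fintype.card_units_int, nsmul_eq_mul]
        ring
    _ = ∑ e₁ : ℤˣ, ∑ e₂ : ℤˣ, ∑ s : ι → ℤˣ,
          Φ (∑ i ∈ {j, k}ᶜ, a i * s i + a j * s j * e₁ + a k * s k * e₂) := by
        refine sum_congr rfl fun e₁ _ => sum_congr rfl fun e₂ _ => ?_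
        rw [signSum, ← Equiv.sum_comp (Equiv.mulRight (Pi.mulSingle j e₁ * Pi.mulSingle k e₂))]
        simp only [Equiv.coe_mulRight, hflip]
    _ = ∑ s : ι → ℤˣ, fourPoint Φ (∑ i ∈ {j, k}ᶜ, a i * s i) (a j * s j) (a k * s k) :=
        (sum_congr rfl fun _ _ => sum_comm).trans sum_comm
    _ = _ := by simp only [fourPoint_mul_units]

lemma signSum_le_of_fourPoint_le {Φ : ℝ → ℝ} {a b : ι → ℝ} {j k : ι} (hjk : j ≠ k)
    (hab : ∀ i, i ≠ j → i ≠ k → a i = b i)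
    (h : ∀ c, fourPoint Φ c (a j) (a k) ≤ fourPoint Φ c (b j) (b k)) :
    signSum Φ a ≤ signSum Φ b := by
  suffices 4 * signSum Φ a ≤ 4 * signSum Φ b by linarith
  rw [four_mul_signSum Φ a hjk, four_mul_signSum Φ b hjk]
  refine sum_le_sum fun s _ => ?_
  have hC : ∑ i ∈ {j, k}ᶜ, a i * s i = ∑ i ∈ {j, k}ᶜ, b i * s i :=
    sum_congr rfl fun i hi => by simp_all
  rw [hC]
  exact h _

lemma signSum_sqrt_le_transfer {Φ : ℝ → ℝ} (hC2 : ContDiff ℝ 2 Φ)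
    (hconv : ConvexOn ℝ Set.univ (deriv (deriv Φ))) {y : ι → ℝ} {j k : ι} {δ : ℝ}
    (hy : 0 ≤ y k) (hjk : j ≠ k) (hδ : 0 ≤ δ) (hord : y k + δ ≤ y j - δ) :
    signSum Φ (fun i => √(y i)) ≤ signSum Φ (fun i => √(transfer y j k δ i)) := by
  refine signSum_le_of_fourPoint_le hjk (fun i hij hik => by simp [transfer, hij, hik])
    fun c => ?_
  simpa [transfer, hjk, hjk.symm] using fourPoint_sqrt_le hC2 hconv c hy hδ hord

end SignSum

lemma exists_perm_antitone {α : Type*} [LinearOrder α] {n : ℕ} (x : Fin n → α) :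
    ∃ σ : Equiv.Perm (Fin n), Antitone (x ∘ σ) :=
  ⟨Tuple.sort (OrderDual.toDual ∘ x), monotone_toDual_comp_iff.1 (Tuple.monotone_sort _)⟩

lemma IsMajorizedBy.comp_perm {n : ℕ} {x y : Fin n → ℝ} (h : IsMajorizedBy x y)
    (σ τ : Equiv.Perm (Fin n)) : IsMajorizedBy (x ∘ σ) (y ∘ τ) := by
  intro A
  obtain ⟨B, hB, hle⟩ := h (A.map σ.toEmbedding)
  refine ⟨B.map τ.symm.toEmbedding, by simpa using hB, ?_⟩
  simpa [sum_map] using hle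

lemma IsMajorizedBy.sum_Iic_le {n : ℕ} {x y : Fin n → ℝ} (h : IsMajorizedBy x y)
    (hy : Antitone y) (m : Fin n) : ∑ i ∈ Iic m, x i ≤ ∑ i ∈ Iic m, y i := by
  obtain ⟨B, hB, hle⟩ := h (Iic m)
  exact hle.trans (hy.sum_le_sum_Iic hB)

theorem signSum_sqrt_le_of_isMajorizedBy {Φ : ℝ → ℝ} (hC2 : ContDiff ℝ 2 Φ)
    (hconv : ConvexOn ℝ Set.univ (deriv (deriv Φ))) {n : ℕ} {x y : Fin n → ℝ} (hy : 0 ≤ y)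
    (hsum : ∑ i, y i = ∑ i, x i) (h : IsMajorizedBy x y) :
    signSum Φ (fun i => √(y i)) ≤ signSum Φ (fun i => √(x i)) := by
  obtain ⟨σ, hσ⟩ := exists_perm_antitone x
  obtain ⟨τ, hτ⟩ := exists_perm_antitone y
  have key := le_of_forall_sum_Iic_le (F := fun z => signSum Φ fun i => √(z i))
    (fun z j k δ hz hjk hδ hord => signSum_sqrt_le_transfer hC2 hconv (hz k) hjk hδ hord)
    hσ (fun i => hy (τ i)) ((h.comp_perm σ τ).sum_Iic_le hτ)
    (by simpa [Equiv.sum_comp] using hsum)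
  rw [← signSum_comp_perm Φ (fun i => √(x i)) σ, ← signSum_comp_perm Φ (fun i => √(y i)) τ]
  exact key

section Rademacher

open scoped ENNReal

lemma rademacherLaw_eq_sum :
    rademacherLaw = (2 : ℝ≥0∞)⁻¹ • ∑ e : ℤˣ, Measure.dirac ((e : ℤ) : ℝ) := by
  rw [rademacherLaw, UnitsInt.univ, sum_pair (by decide), smul_add]
  simp

instance : IsProbabilityMeasure rademacherLaw := by
  constructor
  simp [rademacherLaw, ENNReal.inv_two_add_inv_two]

lemma pi_rademacherLaw {ι : Type*} [Fintype ι] [DecidableEq ι] :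
    Measure.pi (fun _ : ι => rademacherLaw) =
      ((2 : ℝ≥0∞) ^ Fintype.card ι)⁻¹ • ∑ s : ι → ℤˣ, Measure.dirac fun i => ((s i : ℤ) : ℝ) := by
  refine Measure.pi_eq (μ := fun _ : ι => rademacherLaw) fun A hA => ?_
  simp only [rademacherLaw_eq_sum, Measure.smul_apply, Measure.coe_finsetSum, Finset.sum_apply,
    Measure.dirac_apply' _ (MeasurableSet.univ_pi hA), Measure.dirac_apply' _ (hA _), smul_eq_mul]
  rw [prod_mul_distrib, prod_const, prod_univ_sum, ENNReal.inv_pow]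
  congr 1
  rw [Fintype.piFinset_univ]
  refine sum_congr rfl fun s _ => ?_
  classical
  simp [Set.indicator, prod_boole]

theorem integral_rademacher_sum {ι : Type*} [Fintype ι] [DecidableEq ι] {Ω : Type*}
    [MeasureSpace Ω] [IsProbabilityMeasure (ℙ : Measure Ω)]
    {ε : ι → Ω → ℝ} (hmeas : ∀ i, Measurable (ε i))
    (hlaw : ∀ i, Measure.map (ε i) ℙ = rademacherLaw) (hindep : iIndepFun ε ℙ)
    {Φ : ℝ → ℝ} (hΦ : Continuous Φ) (a : ι → ℝ) :
    ∫ ω, Φ (∑ i, a i * ε i ω) ∂ℙ = (2 ^ Fintype.card ι)⁻¹ * signSum Φ a := by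
  have hmap : Measure.map (fun ω i => ε i ω) ℙ = Measure.pi (fun _ : ι => rademacherLaw) := by
    simp [(iIndepFun_iff_map_fun_eq_pi_map fun i => (hmeas i).aemeasurable).1 hindep, hlaw]
  have hcont : Continuous fun x : ι → ℝ => Φ (∑ i, a i * x i) := by fun_prop
  rw [← integral_map (measurable_pi_lambda _ hmeas).aemeasurable hcont.aestronglyMeasurable, hmap,
    pi_rademacherLaw, integral_smul_measure, integral_finsetSum_measure]
  · simp [signSum, integral_dirac]
  · exact fun _ _ => integrable_dirac enorm_lt_top

end Rademacher

theorem schur_monotone_expectation_general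
    (n : ℕ) (Ω : Type) [MeasureSpace Ω] [IsProbabilityMeasure (ℙ : Measure Ω)]
    (ε : Fin n → Ω → ℝ)
    (hmeas : ∀ i, Measurable (ε i))
    (hlaw : ∀ i, Measure.map (ε i) ℙ = rademacherLaw)
    (hindep : iIndepFun ε ℙ)
    (a b : Fin n → ℝ)
    (ha : ∑ i, (a i) ^ 2 = 1) (hb : ∑ i, (b i) ^ 2 = 1)
    (hmaj : IsMajorizedBy (fun i => (a i) ^ 2) (fun i => (b i) ^ 2))
    (Φ : ℝ → ℝ)
    (hC2 : ContDiff ℝ 2 Φ)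
    (hconv : ConvexOn ℝ Set.univ (deriv (deriv Φ))) :
    ∫ ω, Φ (∑ i, b i * ε i ω) ∂ℙ ≤ ∫ ω, Φ (∑ i, a i * ε i ω) ∂ℙ := by
  rw [integral_rademacher_sum hmeas hlaw hindep hC2.continuous,
    integral_rademacher_sum hmeas hlaw hindep hC2.continuous, ← signSum_abs Φ a,
    ← signSum_abs Φ b]
  gcongr
  simp_rw [← Real.sqrt_sq_eq_abs]
  exact signSum_sqrt_le_of_isMajorizedBy hC2 hconv (fun i => sq_nonneg (b i)) (hb.trans ha.symm)
    hmaj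

/-- **Eaton's Schur-monotonicity principle.**  If `(a₁², …, aₙ²) ≺ (b₁², …, bₙ²)` and
`Φ` is even with convex second derivative, then `𝔼 Φ(∑ bᵢ εᵢ) ≤ 𝔼 Φ(∑ aᵢ εᵢ)`. -/
theorem schur_monotone_expectation
    (n : ℕ) (Ω : Type) [MeasureSpace Ω] [IsProbabilityMeasure (ℙ : Measure Ω)]
    (ε : Fin n → Ω → ℝ)
    (hmeas : ∀ i, Measurable (ε i))
    (hlaw : ∀ i, Measure.map (ε i) ℙ = rademacherLaw)
    (hindep : iIndepFun ε ℙ)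
    (a b : Fin n → ℝ)
    (ha : ∑ i, (a i) ^ 2 = 1) (hb : ∑ i, (b i) ^ 2 = 1)
    (hmaj : IsMajorizedBy (fun i => (a i) ^ 2) (fun i => (b i) ^ 2))
    (Φ : ℝ → ℝ)
    (heven : ∀ x, Φ (-x) = Φ x)
    (hC2 : ContDiff ℝ 2 Φ)
    (hconv : ConvexOn ℝ Set.univ (deriv (deriv Φ))) :
    ∫ ω, Φ (∑ i, b i * ε i ω) ∂ℙ ≤ ∫ ω, Φ (∑ i, a i * ε i ω) ∂ℙ :=
  schur_monotone_expectation_general n Ω ε hmeas hlaw hindep a b ha hb hmaj Φ hC2 hconv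
end

section
/- Let p > 3, s ∈ ℝ and t > 0, and let ψ_s : [0, ∞) → ℝ be defined by ψ_s(t) = |s + √t|^p + |s − √t|^p. Then the second derivative of ψ_s at t equals (p(p−1)(p−2)(p−3)/(4 t^{3/2})) ∫₀^{√t} ∫ₓ^{√t} ∫_{|s|−y}^{|s|+y} |z|^{p−4} dz dy dx. -/
/-!
Write `ψ_s(t) = g(√t)` with `g(c) = |a + c|^p + |a - c|^p` and `a = |s|` (the sum is
unchanged by `s ↦ -s`). The chain rule gives `ψ_s''(t) = (c g''(c) - g'(c)) / (4 c³)` at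
`c = √t`, and since `g'(0) = 0`, the fundamental theorem of calculus applied twice turns
`c g''(c) - g'(c)` into `∫₀^c ∫ₓ^c g'''(y) dy dx`. Finally `g'''(y)` equals
`p(p-1)(p-2)(p-3) ∫_{a-y}^{a+y} |z|^{p-4} dz`, because `z ↦ |z|^q z / (q + 1)` is a primitive
of `|z|^q` for `q > -1`.
-/

open Real intervalIntegral Set MeasureTheory Filter Topology

theorem intervalIntegrable_abs_rpow {q : ℝ} (hq : -1 < q) (a b : ℝ) :
    IntervalIntegrable (fun z : ℝ => |z| ^ q) volume a b := by
  have nonneg {c : ℝ} (hc : 0 ≤ c) : IntervalIntegrable (fun z : ℝ => |z| ^ q) volume 0 c :=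
    (intervalIntegrable_rpow' hq).congr fun z hz => by
      rw [uIoc_of_le hc] at hz
      simp only [abs_of_pos hz.1]
  have from_zero (c : ℝ) : IntervalIntegrable (fun z : ℝ => |z| ^ q) volume 0 c := by
    rcases le_total 0 c with hc | hc
    · exact nonneg hc
    · simpa using (nonneg (neg_nonneg.2 hc)).comp_sub_left 0
  exact (from_zero a).symm.trans (from_zero b)

theorem integral_abs_rpow {q : ℝ} (hq : -1 < q) (a b : ℝ) :
    ∫ z in a..b, |z| ^ q = (|b| ^ q * b - |a| ^ q * a) / (q + 1) := by
  have hq' : q + 1 ≠ 0 := by linarith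
  have nonneg {c : ℝ} (hc : 0 ≤ c) : ∫ z in 0..c, |z| ^ q = |c| ^ q * c / (q + 1) := by
    rw [integral_congr (g := fun z => z ^ q) fun z hz => ?_, integral_rpow (Or.inl hq),
      zero_rpow hq', abs_of_nonneg hc, rpow_add_one' hc hq', sub_zero]
    rw [uIcc_of_le hc] at hz
    simp only [abs_of_nonneg hz.1]
  have from_zero (c : ℝ) : ∫ z in 0..c, |z| ^ q = |c| ^ q * c / (q + 1) := by
    rcases le_total 0 c with hc | hc
    · exact nonneg hc
    · have h := integral_comp_neg (a := 0) (b := -c) fun z : ℝ => |z| ^ q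
      simp only [abs_neg, neg_neg, neg_zero, nonneg (neg_nonneg.2 hc)] at h
      rw [integral_symm, ← h]
      ring
  rw [← integral_interval_sub_left (intervalIntegrable_abs_rpow hq 0 b)
    (intervalIntegrable_abs_rpow hq 0 a), from_zero, from_zero]
  ring

theorem abs_rpow_mul_self_eq_integral {q : ℝ} (hq : -1 < q) (x : ℝ) :
    |x| ^ q * x = (q + 1) * ∫ z in 0..x, |z| ^ q := by
  rw [integral_abs_rpow hq, abs_zero, mul_zero, sub_zero]
  field_simp [show q + 1 ≠ 0 by linarith]

theorem continuous_abs_rpow_mul_self {q : ℝ} (hq : -1 < q) :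
    Continuous fun x : ℝ => |x| ^ q * x := by
  simp_rw [abs_rpow_mul_self_eq_integral hq]
  exact continuous_const.mul (continuous_primitive (intervalIntegrable_abs_rpow hq) 0)

theorem hasDerivAt_abs_rpow_mul_self {q : ℝ} (hq : 0 ≤ q) (x : ℝ) :
    HasDerivAt (fun x : ℝ => |x| ^ q * x) ((q + 1) * |x| ^ q) x := by
  simp_rw [abs_rpow_mul_self_eq_integral (show -1 < q by linarith)]
  have hcont : Continuous fun z : ℝ => |z| ^ q := (continuous_rpow_const hq).comp continuous_abs
  exact (hcont.integral_hasStrictDerivAt 0 x).hasDerivAt.const_mul _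

theorem integral_integral_eq_of_hasDerivAt {g₁ g₂ g₃ : ℝ → ℝ}
    (hg₁ : ∀ x, HasDerivAt g₁ (g₂ x) x) (hg₂ : ∀ x, HasDerivAt g₂ (g₃ x) x)
    (hg₃ : Continuous g₃) (b c : ℝ) :
    ∫ x in b..c, ∫ y in x..c, g₃ y = (c - b) * g₂ c - (g₁ c - g₁ b) := by
  have inner (x : ℝ) : ∫ y in x..c, g₃ y = g₂ c - g₂ x :=
    integral_eq_sub_of_hasDerivAt (fun y _ => hg₂ y) (hg₃.intervalIntegrable x c)
  have hg₂_cont : Continuous g₂ := Differentiable.continuous fun x => (hg₂ x).differentiableAt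
  simp_rw [inner]
  rw [integral_sub intervalIntegrable_const (hg₂_cont.intervalIntegrable b c),
    intervalIntegral.integral_const,
    integral_eq_sub_of_hasDerivAt (fun x _ => hg₁ x) (hg₂_cont.intervalIntegrable b c),
    smul_eq_mul]

theorem deriv_deriv_comp_sqrt {g g₁ : ℝ → ℝ} {g₂ t : ℝ} (ht : 0 < t)
    (hg : ∀ x, 0 < x → HasDerivAt g (g₁ x) x) (hg₁ : HasDerivAt g₁ g₂ (√t)) :
    deriv (deriv fun u => g (√u)) t = (√t * g₂ - g₁ (√t)) / (4 * √t ^ 3) := by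
  have hsqrt {u : ℝ} (hu : 0 < u) : HasDerivAt (√·) (1 / (2 * √u)) u :=
    hasDerivAt_sqrt hu.ne'
  have first : deriv (fun u => g (√u)) =ᶠ[𝓝 t] fun u => g₁ (√u) / (2 * √u) := by
    filter_upwards [eventually_gt_nhds ht] with u hu
    have h : HasDerivAt (fun u => g (√u)) (g₁ (√u) * (1 / (2 * √u))) u :=
      (hg _ (sqrt_pos.2 hu)).comp u (hsqrt hu)
    rw [h.deriv]
    ring
  have hst : 0 < √t := sqrt_pos.2 ht
  have second : HasDerivAt (fun u => g₁ (√u) / (2 * √u))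
      ((g₂ * (1 / (2 * √t)) * (2 * √t) - g₁ (√t) * (2 * (1 / (2 * √t)))) /
        (2 * √t) ^ 2) t :=
    (hg₁.comp t (hsqrt ht)).div ((hsqrt ht).const_mul 2) (by positivity)
  rw [first.deriv_eq, second.deriv]
  field_simp
  ring

-- `ψ_s(t) = evenAbsRpow p s (√t)`
noncomputable def evenAbsRpow (p a x : ℝ) : ℝ := |a + x| ^ p + |a - x| ^ p

noncomputable def oddSignedRpow (p a x : ℝ) : ℝ :=
  |a + x| ^ p * (a + x) - |a - x| ^ p * (a - x)

theorem evenAbsRpow_abs (p a : ℝ) : evenAbsRpow p |a| = evenAbsRpow p a := by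
  funext x
  rcases abs_choice a with h | h
  · rw [h]
  · rw [h, evenAbsRpow, evenAbsRpow, neg_add_eq_sub, abs_sub_comm, neg_sub_left, abs_neg,
      add_comm x a, add_comm]

theorem hasDerivAt_evenAbsRpow {p : ℝ} (hp : 1 < p) (a x : ℝ) :
    HasDerivAt (evenAbsRpow p a) (p * oddSignedRpow (p - 2) a x) x := by
  have h := ((hasDerivAt_abs_rpow (a + x) hp).comp_const_add a x).add
    ((hasDerivAt_abs_rpow (a - x) hp).comp_const_sub a x)
  refine h.congr_deriv ?_
  simp only [oddSignedRpow]
  ring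

theorem hasDerivAt_oddSignedRpow {q : ℝ} (hq : 0 ≤ q) (a x : ℝ) :
    HasDerivAt (oddSignedRpow q a) ((q + 1) * evenAbsRpow q a x) x := by
  have h := ((hasDerivAt_abs_rpow_mul_self hq (a + x)).comp_const_add a x).sub
    ((hasDerivAt_abs_rpow_mul_self hq (a - x)).comp_const_sub a x)
  refine h.congr_deriv ?_
  simp only [evenAbsRpow]
  ring

theorem continuous_oddSignedRpow {q : ℝ} (hq : -1 < q) (a : ℝ) :
    Continuous (oddSignedRpow q a) :=
  ((continuous_abs_rpow_mul_self hq).comp (continuous_const_add a)).sub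
    ((continuous_abs_rpow_mul_self hq).comp (continuous_sub_left a))

theorem oddSignedRpow_eq_integral {q : ℝ} (hq : -1 < q) (a x : ℝ) :
    oddSignedRpow q a x = (q + 1) * ∫ z in (a - x)..(a + x), |z| ^ q := by
  rw [integral_abs_rpow hq, oddSignedRpow]
  field_simp [show q + 1 ≠ 0 by linarith]

/-- **Integral formula for `ψ_s''`, case `p > 3`** (Lemma 2.1, formula (2.1)):
for `ψ_s(t) = |s + √t|^p + |s − √t|^p` and `t > 0`,
`ψ_s''(t) = p(p−1)(p−2)(p−3)/(4 t^{3/2}) ∫₀^{√t} ∫ₓ^{√t} ∫_{|s|−y}^{|s|+y} |z|^{p−4} dz dy dx`. -/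
theorem psi_second_deriv_formula (p : ℝ) (hp : 3 < p) (s t : ℝ) (ht : 0 < t) :
    deriv (deriv (fun u : ℝ => |s + Real.sqrt u| ^ p + |s - Real.sqrt u| ^ p)) t =
      p * (p - 1) * (p - 2) * (p - 3) / (4 * t ^ ((3 : ℝ) / 2)) *
        ∫ x in (0 : ℝ)..Real.sqrt t, ∫ y in x..Real.sqrt t,
          ∫ z in (|s| - y)..(|s| + y), |z| ^ (p - 4) := by
  set a := |s|
  have hψ : (fun u => |s + √u| ^ p + |s - √u| ^ p) = fun u => evenAbsRpow p a (√u) := by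
    rw [evenAbsRpow_abs]; rfl
  have h₁ (x : ℝ) : HasDerivAt (fun x => p * oddSignedRpow (p - 2) a x)
      (p * (p - 1) * evenAbsRpow (p - 2) a x) x := by
    have h := (hasDerivAt_oddSignedRpow (q := p - 2) (by linarith) a x).const_mul p
    exact h.congr_deriv (by ring)
  have h₂ (x : ℝ) : HasDerivAt (fun x => p * (p - 1) * evenAbsRpow (p - 2) a x)
      (p * (p - 1) * (p - 2) * oddSignedRpow (p - 4) a x) x := by
    have h := (hasDerivAt_evenAbsRpow (p := p - 2) (by linarith) a x).const_mul (p * (p - 1))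
    rw [show p - 2 - 2 = p - 4 by ring] at h
    exact h.congr_deriv (by ring)
  have h₃ : Continuous fun x => p * (p - 1) * (p - 2) * oddSignedRpow (p - 4) a x :=
    continuous_const.mul (continuous_oddSignedRpow (by linarith) a)
  calc _ = (√t * (p * (p - 1) * evenAbsRpow (p - 2) a √t) - p * oddSignedRpow (p - 2) a √t)
        / (4 * √t ^ 3) := by
        rw [hψ, deriv_deriv_comp_sqrt ht
          (fun x _ => hasDerivAt_evenAbsRpow (by linarith) a x) (h₁ _)]
    _ = (∫ x in (0 : ℝ)..√t, ∫ y in x..√t,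
          p * (p - 1) * (p - 2) * oddSignedRpow (p - 4) a y) / (4 * √t ^ 3) := by
        rw [integral_integral_eq_of_hasDerivAt h₁ h₂ h₃]
        simp [oddSignedRpow]
    _ = _ := by
        simp_rw [oddSignedRpow_eq_integral (show -1 < p - 4 by linarith),
          intervalIntegral.integral_const_mul]
        rw [rpow_div_two_eq_sqrt _ ht.le, rpow_ofNat]
        ring
end

section
/- Let p = 3, s ∈ ℝ and t > 0, and let ψ_s : [0, ∞) → ℝ be defined by ψ_s(t) = |s + √t|³ + |s − √t|³. Then the second derivative of ψ_s at t equals 3(t − s²)₊ / (2 t^{3/2}), where x₊ = max{x, 0}. -/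
open Real

/-! For `x ≥ 0`, `|s + x|³ + |s - x|³ = 2|s|³ + 6|s|x² + 2(x - |s|)₊³`. With `x = √u` this writes
`ψ_s` as an affine function of `u` plus `2((√u - |s|)₊)³`, and the positive-part powers `y₊³` and
`y₊²` are differentiable also at the kink `y = 0`. Hence
`ψ_s'(u) = 6|s| + 3 h(√u)` with `h(y) = (y - |s|)₊² / y`, and `h'(y) = (y² - s²)₊ / y²`. -/

open Asymptotics Filter in
theorem hasDerivAt_max_zero_pow {n : ℕ} (hn : 1 < n) (x : ℝ) :
    HasDerivAt (fun y : ℝ => max y 0 ^ n) (n * max x 0 ^ (n - 1)) x := by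
  have hn₀ : n ≠ 0 := by omega
  have hn₁ : n - 1 ≠ 0 := by omega
  rcases lt_trichotomy x 0 with hx | rfl | hx
  · have h : (fun y : ℝ => max y 0 ^ n) =ᶠ[nhds x] fun _ => 0 := by
      filter_upwards [Iio_mem_nhds hx] with y hy
      simp [max_eq_right (Set.mem_Iio.mp hy).le, hn₀]
    simpa [max_eq_right hx.le, hn₁] using (hasDerivAt_const x (0 : ℝ)).congr_of_eventuallyEq h
  · -- `|y₊ⁿ| ≤ |y|ⁿ = o(y)` at `0` because `n > 1`.
    rw [hasDerivAt_iff_isLittleO_nhds_zero]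
    have hbound : (fun h : ℝ => max h 0 ^ n) =O[nhds 0] fun h => h ^ n :=
      IsBigO.of_bound 1 (Eventually.of_forall fun h => by
        rw [one_mul, norm_pow, norm_pow, Real.norm_eq_abs, Real.norm_eq_abs,
          abs_of_nonneg (le_max_right h 0)]
        exact pow_le_pow_left₀ (le_max_right h 0) (max_le (le_abs_self h) (abs_nonneg h)) n)
    simpa [hn₀, hn₁] using hbound.trans_isLittleO (isLittleO_pow_id hn)
  · have h : (fun y : ℝ => max y 0 ^ n) =ᶠ[nhds x] fun y => y ^ n := by
      filter_upwards [Ioi_mem_nhds hx] with y hy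
      rw [max_eq_left (Set.mem_Ioi.mp hy).le]
    simpa [max_eq_left hx.le] using (hasDerivAt_pow n x).congr_of_eventuallyEq h

theorem abs_add_pow_three_add_abs_sub_pow_three (s : ℝ) {x : ℝ} (hx : 0 ≤ x) :
    |s + x| ^ 3 + |s - x| ^ 3 = 2 * |s| ^ 3 + 6 * |s| * x ^ 2 + 2 * max (x - |s|) 0 ^ 3 := by
  have hsym : |s + x| ^ 3 + |s - x| ^ 3 = (|s| + x) ^ 3 + abs (x - |s|) ^ 3 := by
    rcases abs_choice s with hs | hs <;> rw [hs]
    · rw [abs_sub_comm, abs_of_nonneg (by linarith [abs_nonneg s] : 0 ≤ s + x)]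
    · rw [abs_of_nonpos (by linarith [abs_nonneg s] : s - x ≤ 0), show x - -s = s + x by ring]
      ring
  rw [hsym]
  rcases le_total |s| x with h | h
  · rw [abs_of_nonneg (sub_nonneg.2 h), max_eq_left (sub_nonneg.2 h)]
    ring
  · rw [abs_of_nonpos (sub_nonpos.2 h), max_eq_right (sub_nonpos.2 h)]
    ring

theorem hasDerivAt_max_sub_sq_div {a x : ℝ} (ha : 0 ≤ a) (hx : 0 < x) :
    HasDerivAt (fun y => max (y - a) 0 ^ 2 / y) (max (x ^ 2 - a ^ 2) 0 / x ^ 2) x := by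
  have hnum := (hasDerivAt_max_zero_pow one_lt_two (x - a)).comp x ((hasDerivAt_id x).sub_const a)
  refine (hnum.div (hasDerivAt_id x) hx.ne').congr_deriv ?_
  rcases le_total x a with h | h
  · rw [max_eq_right (sub_nonpos.2 h), max_eq_right (by nlinarith)]
    simp [h]
  · rw [max_eq_left (sub_nonneg.2 h), max_eq_left (by nlinarith)]
    norm_num [max_eq_left (sub_nonneg.2 h)]
    field_simp
    ring

noncomputable def psi (s u : ℝ) : ℝ := |s + √u| ^ (3 : ℝ) + |s - √u| ^ (3 : ℝ)

theorem psi_eq_of_nonneg (s : ℝ) {u : ℝ} (hu : 0 ≤ u) :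
    psi s u = 2 * |s| ^ 3 + 6 * |s| * u + 2 * max (√u - |s|) 0 ^ 3 := by
  rw [psi, show (3 : ℝ) = (3 : ℕ) by norm_num, rpow_natCast, rpow_natCast,
    abs_add_pow_three_add_abs_sub_pow_three s (sqrt_nonneg u), sq_sqrt hu]

theorem hasDerivAt_psi (s : ℝ) {u : ℝ} (hu : 0 < u) :
    HasDerivAt (psi s) (6 * |s| + 3 * (max (√u - |s|) 0 ^ 2 / √u)) u := by
  have hsqrt := hasDerivAt_sqrt hu.ne'
  have hcube := (hasDerivAt_max_zero_pow (by norm_num : 1 < 3) (√u - |s|)).comp u (hsqrt.sub_const |s|)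
  have hF := (((hasDerivAt_id u).const_mul (6 * |s|)).const_add (2 * |s| ^ 3)).add (hcube.const_mul 2)
  refine (hF.congr_deriv ?_).congr_of_eventuallyEq ?_
  · field_simp
    norm_num
  · filter_upwards [eventually_gt_nhds hu] with v hv
    exact psi_eq_of_nonneg s hv.le

theorem hasDerivAt_deriv_psi (s : ℝ) {u : ℝ} (hu : 0 < u) :
    HasDerivAt (deriv (psi s)) (3 * max (u - s ^ 2) 0 / (2 * u * √u)) u := by
  have hsqrt := hasDerivAt_sqrt hu.ne'
  have hquot := (hasDerivAt_max_sub_sq_div (abs_nonneg s) (sqrt_pos.2 hu)).comp u hsqrt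
  have hderiv : deriv (psi s) =ᶠ[nhds u] fun v => 6 * |s| + 3 * (max (√v - |s|) 0 ^ 2 / √v) :=
    (eventually_gt_nhds hu).mono fun v hv => (hasDerivAt_psi s hv).deriv
  refine ((hquot.const_mul 3).const_add (6 * |s|)).congr_of_eventuallyEq hderiv |>.congr_deriv ?_
  rw [sq_sqrt hu.le, sq_abs]
  field_simp

/-- **Formula for `ψ_s''`, case `p = 3`** (Lemma 2.1, formula (2.2)):
for `ψ_s(t) = |s + √t|³ + |s − √t|³` and `t > 0`,
`ψ_s''(t) = 3(t − s²)₊ / (2 t^{3/2})`. -/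
theorem psi_second_deriv_formula_three (s t : ℝ) (ht : 0 < t) :
    deriv (deriv (fun u : ℝ => |s + Real.sqrt u| ^ (3 : ℝ) + |s - Real.sqrt u| ^ (3 : ℝ))) t =
      3 * max (t - s ^ 2) 0 / (2 * t ^ ((3 : ℝ) / 2)) := by
  have hpow : t ^ ((3 : ℝ) / 2) = t * √t := by
    rw [show (3 : ℝ) / 2 = 1 + 1 / 2 by norm_num, rpow_add ht, rpow_one, ← sqrt_eq_rpow]
  rw [hpow, ← mul_assoc]
  exact (hasDerivAt_deriv_psi s ht).deriv
end

section
/- Let p > 3. Then there exists a constant C_p > 0, depending only on p, such that for every x ∈ [0, 1/2], |√(1/2 + x) + √(1/2 − x)|^p + |√(1/2 + x) − √(1/2 − x)|^p ≤ 2^{p/2} − C_p x². -/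
/-!
Write `a = √(1/2 + x)`, `b = √(1/2 - x)` and `t = 2ab = √(1 - 4x²) ∈ [0, 1]`. Then
`(a ± b)² = 1 ± t`, so the left-hand side is `(1 + t)^q + (1 - t)^q` with `q = p/2 > 1`.
Convexity of `s ↦ s^q` bounds this by the chords through `0, 1, 2`, i.e. by
`2^q - (2^q - 2)(1 - t)`, and `1 - t ≥ (1 - t²)/2 = 2x²`.
-/

open Real

lemma abs_rpow_eq_sq_rpow_half (y p : ℝ) : |y| ^ p = (y ^ 2) ^ (p / 2) := by
  rw [← sq_abs, ← rpow_natCast, ← rpow_mul (abs_nonneg y)]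
  ring_nf

lemma sqrt_add_sqrt_sq {u v : ℝ} (hu : 0 ≤ u) (hv : 0 ≤ v) :
    (√u + √v) ^ 2 = u + v + 2 * √(u * v) := by
  rw [add_sq, sq_sqrt hu, sq_sqrt hv, sqrt_mul hu]
  ring

lemma sqrt_sub_sqrt_sq {u v : ℝ} (hu : 0 ≤ u) (hv : 0 ≤ v) :
    (√u - √v) ^ 2 = u + v - 2 * √(u * v) := by
  rw [sub_sq, sq_sqrt hu, sq_sqrt hv, sqrt_mul hu]
  ring

lemma one_add_rpow_le {q t : ℝ} (hq : 1 ≤ q) (ht₀ : 0 ≤ t) (ht₁ : t ≤ 1) :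
    (1 + t) ^ q ≤ (1 - t) + t * 2 ^ q := by
  have h := (convexOn_rpow hq).2 (Set.mem_Ici.2 zero_le_one) (Set.mem_Ici.2 zero_le_two)
    (sub_nonneg.2 ht₁) ht₀ (sub_add_cancel 1 t)
  simp only [smul_eq_mul, one_rpow, mul_one] at h
  rwa [show 1 - t + t * 2 = 1 + t by ring] at h

lemma one_add_rpow_add_one_sub_rpow_le {q t : ℝ} (hq : 1 ≤ q) (ht₀ : 0 ≤ t) (ht₁ : t ≤ 1) :
    (1 + t) ^ q + (1 - t) ^ q ≤ 2 ^ q - (2 ^ q - 2) / 2 * (1 - t ^ 2) := by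
  have h_plus := one_add_rpow_le hq ht₀ ht₁
  have h_minus : (1 - t) ^ q ≤ 1 - t := rpow_le_self_of_le_one (by linarith) (by linarith) hq
  have h_two : (2 : ℝ) ≤ 2 ^ q := self_le_rpow_of_one_le one_le_two hq
  -- `1 - t² = (1 - t)(1 + t) ≤ 2(1 - t)`
  nlinarith [mul_nonneg (sub_nonneg.2 h_two) (mul_nonneg (sub_nonneg.2 ht₁) (sub_nonneg.2 ht₁))]

/-- **Two-coefficient diagonal stability** (the case `n = 2` in the proof of Theorem 1.3):
for `p > 3` there is `C_p > 0` such that for all `x ∈ [0, 1/2]`,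
`|√(1/2 + x) + √(1/2 − x)|^p + |√(1/2 + x) − √(1/2 − x)|^p ≤ 2^{p/2} − C_p x²`. -/
theorem two_coefficient_stability (p : ℝ) (hp : 3 < p) :
    ∃ C : ℝ, 0 < C ∧ ∀ x ∈ Set.Icc (0 : ℝ) (1 / 2),
      |Real.sqrt (1 / 2 + x) + Real.sqrt (1 / 2 - x)| ^ p +
          |Real.sqrt (1 / 2 + x) - Real.sqrt (1 / 2 - x)| ^ p ≤
        (2 : ℝ) ^ (p / 2) - C * x ^ 2 := by
  have hq : 1 < p / 2 := by linarith
  refine ⟨2 * (2 ^ (p / 2) - 2), by linarith [self_lt_rpow_of_one_lt one_lt_two hq], ?_⟩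
  rintro x ⟨hx₀, hx₁⟩
  have hu : 0 ≤ 1 / 2 + x := by linarith
  have hv : 0 ≤ 1 / 2 - x := by linarith
  set t := 2 * √((1 / 2 + x) * (1 / 2 - x)) with ht
  have ht₀ : 0 ≤ t := by positivity
  have ht_sq : t ^ 2 = 1 - 4 * x ^ 2 := by
    rw [ht, mul_pow, sq_sqrt (mul_nonneg hu hv)]
    ring
  have ht₁ : t ≤ 1 := by nlinarith
  rw [abs_rpow_eq_sq_rpow_half, abs_rpow_eq_sq_rpow_half, sqrt_add_sqrt_sq hu hv,
    sqrt_sub_sqrt_sq hu hv, ← ht]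
  calc (1 / 2 + x + (1 / 2 - x) + t) ^ (p / 2) + (1 / 2 + x + (1 / 2 - x) - t) ^ (p / 2)
      = (1 + t) ^ (p / 2) + (1 - t) ^ (p / 2) := by ring_nf
    _ ≤ 2 ^ (p / 2) - (2 ^ (p / 2) - 2) / 2 * (1 - t ^ 2) :=
      one_add_rpow_add_one_sub_rpow_le hq.le ht₀ ht₁
    _ = 2 ^ (p / 2) - 2 * (2 ^ (p / 2) - 2) * x ^ 2 := by rw [ht_sq]; ring
end
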